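/- arXiv:1405.0096 — 2 statements merged into one kernel-verified Lean document; each statement's English description precedes it below -/
import Mathlib

section
/- Let H_1 be an r_1-regular graph with r_1 ≥ 1, let α, β be the two roots of x² − r_1 x − (m−1) = 0, and let G = G[F,V_k,H_v] with |V_k| = k. Then every λ ∈ σ(A(H_v)) other than α and β is an eigenvalue of A(G) with multiplicity at least k. Moreover, for every x ≠ r_1, f_{A(G)}(x) = (x − r_1)^k · ∏_{j=1}^{m−2} (x − λ_j(H_1))^k · det( x I_n − A(F) − ((m−1)/(x − r_1)) · diag(I_k, 0) ), so that the remaining n + k eigenvalues of A(G) depend only on F, V_k, m and r_1 and not otherwise on H_v. -/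
open Matrix BigOperators
open scoped Classical

/-- The adjacency matrix of a simple graph, with entries in `R`. -/
noncomputable def adjMat (R : Type*) [Zero R] [One R] {V : Type*} [Fintype V]
    (G : SimpleGraph V) : Matrix V V R :=
  Matrix.of fun x y => if G.Adj x y then (1 : R) else 0

/-- The degree of a vertex. -/
noncomputable def gdeg {V : Type*} [Fintype V] (G : SimpleGraph V) (x : V) : ℕ :=
  (Finset.univ.filter fun y => G.Adj x y).card

/-- `G` is `r`-regular. -/
def IsReg {V : Type*} [Fintype V] (G : SimpleGraph V) (r : ℕ) : Prop :=
  ∀ x, gdeg G x = r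

/-- The signless Laplacian matrix `Q(G) = D(G) + A(G)`. -/
noncomputable def qMat (R : Type*) [AddMonoidWithOne R] {V : Type*} [Fintype V]
    (G : SimpleGraph V) : Matrix V V R :=
  Matrix.diagonal (fun x => (gdeg G x : R)) + adjMat R G

/-- The adjacency spectrum, as the multiset of real roots (with multiplicity) of the
characteristic polynomial of the (real symmetric) adjacency matrix. -/
noncomputable def aSpec {V : Type*} [Fintype V] (G : SimpleGraph V) : Multiset ℝ :=
  (adjMat ℝ G).charpoly.roots

/-- The signless Laplacian spectrum. -/
noncomputable def qSpec {V : Type*} [Fintype V] (G : SimpleGraph V) : Multiset ℝ :=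
  (qMat ℝ G).charpoly.roots

/-- The `M`-coronal `Γ_M(x) = 1ᵀ (xI − M)⁻¹ 1`, the sum of the entries of `(xI − M)⁻¹`. -/
noncomputable def coronal {n R : Type*} [Fintype n] [DecidableEq n] [Field R]
    (M : Matrix n n R) (x : R) : R :=
  ∑ i, ∑ j, ((x • (1 : Matrix n n R) - M)⁻¹) i j

/-- Embeds a `P × P` matrix as a `V × V` matrix supported on the image of `g`, zero elsewhere.
If the vertices of `V` are ordered listing the image of `g` first, this is `diag(M, 0)`. -/
noncomputable def embedMatrix {P V R : Type*} [Fintype P] [AddCommMonoid R]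
    (g : P → V) (M : Matrix P P R) : Matrix V V R :=
  Matrix.of fun x y => ∑ px : P, ∑ py : P, if x = g px ∧ y = g py then M px py else 0

/-- The graph `H − v` obtained by deleting the vertex `v`. -/
def delVert {W : Type*} (H : SimpleGraph W) (v : W) : SimpleGraph {w : W // w ≠ v} :=
  H.comap Subtype.val

/-- The graph `H − {u,v}` obtained by deleting the two vertices `u, v`. -/
def delVert2 {W : Type*} (H : SimpleGraph W) (u v : W) :
    SimpleGraph {w : W // w ≠ u ∧ w ≠ v} :=
  H.comap Subtype.val

/-- The join `G₁ ∨ G₂` of two vertex-disjoint graphs: their disjoint union together with all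
edges between the two parts. -/
def sgJoin {α β : Type*} (G₁ : SimpleGraph α) (G₂ : SimpleGraph β) : SimpleGraph (α ⊕ β) where
  Adj x y :=
    match x, y with
    | Sum.inl a, Sum.inl b => G₁.Adj a b
    | Sum.inl _, Sum.inr _ => True
    | Sum.inr _, Sum.inl _ => True
    | Sum.inr a, Sum.inr b => G₂.Adj a b
  symm := by
    constructor
    rintro (a | a) (b | b) h
    · exact G₁.adj_symm h
    · trivial
    · trivial
    · exact G₂.adj_symm h
  loopless := by
    constructor
    rintro (a | a) h
    · exact G₁.irrefl h
    · exact G₂.irrefl h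

/-- The graph `G[F, V_k, H_v]` with `k` pockets: take one copy of `F` and `k` disjoint copies
of `H` (with specified vertex `v`), identifying the vertex `v` of the `i`-th copy with the
vertex `f i` of `F`.  The `i`-th copy of `H − v` is carried by `{i} × {w // w ≠ v}`. -/
def pocketGraph {V W : Type*} (F : SimpleGraph V) (H : SimpleGraph W) (v : W)
    {k : ℕ} (f : Fin k ↪ V) : SimpleGraph (V ⊕ (Fin k × {w : W // w ≠ v})) where
  Adj x y :=
    match x, y with
    | Sum.inl a, Sum.inl b => F.Adj a b
    | Sum.inl a, Sum.inr (i, w) => a = f i ∧ H.Adj v w.1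
    | Sum.inr (i, w), Sum.inl a => a = f i ∧ H.Adj v w.1
    | Sum.inr (i, w), Sum.inr (j, w') => i = j ∧ H.Adj w.1 w'.1
  symm := by
    constructor
    rintro (a | ⟨i, w⟩) (b | ⟨j, w'⟩) h
    · exact F.adj_symm h
    · exact h
    · exact h
    · exact ⟨h.1.symm, H.adj_symm h.2⟩
  loopless := by
    constructor
    rintro (a | ⟨i, w⟩) h
    · exact F.irrefl h
    · exact H.irrefl h.2

/-- The graph `G[F, E_k, H_{uv}]` with `k` edge-pockets: take one copy of `F` and `k` disjoint
copies of `H` (with specified edge `uv`), pasting the edge `uv` of the `i`-th copy onto the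
edge `e_i = (a i)(b i)` of `F` (identifying `u` with `a i` and `v` with `b i`).  The `i`-th
copy of `H − {u,v}` is carried by `{i} × {w // w ≠ u ∧ w ≠ v}`. -/
def edgePocketGraph {V W : Type*} (F : SimpleGraph V) (H : SimpleGraph W) (u v : W)
    {k : ℕ} (a b : Fin k → V) :
    SimpleGraph (V ⊕ (Fin k × {w : W // w ≠ u ∧ w ≠ v})) where
  Adj x y :=
    match x, y with
    | Sum.inl s, Sum.inl t => F.Adj s t
    | Sum.inl s, Sum.inr (i, w) => (s = a i ∧ H.Adj u w.1) ∨ (s = b i ∧ H.Adj v w.1)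
    | Sum.inr (i, w), Sum.inl s => (s = a i ∧ H.Adj u w.1) ∨ (s = b i ∧ H.Adj v w.1)
    | Sum.inr (i, w), Sum.inr (j, w') => i = j ∧ H.Adj w.1 w'.1
  symm := by
    constructor
    rintro (s | ⟨i, w⟩) (t | ⟨j, w'⟩) h
    · exact F.adj_symm h
    · exact h
    · exact h
    · exact ⟨h.1.symm, H.adj_symm h.2⟩
  loopless := by
    constructor
    rintro (s | ⟨i, w⟩) h
    · exact F.irrefl h
    · exact H.irrefl h.2
/-!
Order the vertices of `G` as those of `F` followed by the `k` pockets. Since `v` is adjacent to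
every vertex of `H₁ = H − v`, the matrix `xI − A(G)` has lower right block `I_k ⊗ (xI − A(H₁))`,
and its off-diagonal block joins `f i` to every vertex of the `i`-th pocket. As `H₁` is
`r₁`-regular, the entries of `(xI − A(H₁))⁻¹` sum to `(m − 1)/(x − r₁)`, so the Schur complement
of that block is `xI − A(F) − ((m − 1)/(x − r₁)) diag(I_k, 0)`. Clearing the denominator turns
this into a polynomial identity, valid for every `x`, in which the rows of `F` outside `V_k`
contribute a factor `(x − r₁)^(n − k)`.

The same identity for a one-vertex base graph with a single pocket, which is `H` itself, reads
`(x − r₁) f_H = (x − α)(x − β) f_{H₁}`. Hence every eigenvalue of `H` other than `α, β` is an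
eigenvalue of `H₁`, with one more unit of multiplicity at `r₁`, and comparing multiplicities in
the two identities gives the bound `k`.
-/

open Polynomial
open scoped Kronecker

section MatrixLemmas

variable {K : Type*} [Field K] {n ι κ V : Type*} [Fintype n] [DecidableEq n]

theorem det_smul_one_sub_eq_eval_charpoly {R : Type*} [CommRing R] (M : Matrix n n R) (x : R) :
    (x • (1 : Matrix n n R) - M).det = M.charpoly.eval x := by
  rw [eval_charpoly, smul_one_eq_diagonal, scalar_apply]

theorem det_sub_smul_eq_pow_mul_det (M E : Matrix n n K) {t : K} (ht : t ≠ 0) (c : K) :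
    (t • M - c • E).det = t ^ Fintype.card n * (M - (c / t) • E).det := by
  rw [← det_smul, smul_sub, smul_smul, mul_div_cancel₀ c ht]

theorem sum_sum_inv_of_sum_eq [Fintype κ] [DecidableEq κ] {S : Matrix κ κ K} (hS : IsUnit S.det)
    {c : K} (hc : ∀ i, ∑ j, S i j = c) : ∑ i, ∑ j, S⁻¹ i j = Fintype.card κ / c := by
  have hS1 : S *ᵥ (fun _ => 1) = c • fun _ => 1 := by
    ext i
    simpa [mulVec, dotProduct] using hc i
  have hinv1 : ∀ i, (S⁻¹ *ᵥ fun _ => 1) i = c⁻¹ := fun i => by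
    have h := congrFun (congrArg (S⁻¹ *ᵥ ·) hS1) i
    simp only [mulVec_mulVec, nonsing_inv_mul _ hS, one_mulVec, mulVec_smul, Pi.smul_apply,
      smul_eq_mul] at h
    exact eq_inv_of_mul_eq_one_right h.symm
  calc ∑ i, ∑ j, S⁻¹ i j = ∑ i, (S⁻¹ *ᵥ fun _ => 1) i := by simp [mulVec, dotProduct]
    _ = Fintype.card κ / c := by simp [hinv1, div_eq_mul_inv]

theorem pow_card_compl_dvd_det {R : Type*} [CommRing R] (M : Matrix n n R) (p : R)
    (s : Finset n) (h : ∀ i ∉ s, ∀ j, p ∣ M i j) : p ^ sᶜ.card ∣ M.det := by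
  choose N hN using h
  let d : n → R := fun i => if i ∈ s then 1 else p
  let N' : Matrix n n R := of fun i j => if hi : i ∈ s then M i j else N i hi j
  have hM : M = of fun i j => d i * N' i j := by
    ext i j
    by_cases hi : i ∈ s <;> simp [d, N', hi, hN]
  have hd : ∏ i, d i = p ^ sᶜ.card := by
    simp [d, Finset.prod_ite, Finset.filter_not, Finset.compl_eq_univ_sdiff]
  rw [hM, det_mul_column, hd]
  exact dvd_mul_right _ _

theorem embedMatrix_apply_of_notMem_range {R : Type*} [AddCommMonoid R] [Fintype ι] {g : ι → V}
    (M : Matrix ι ι R) {a : V} (ha : a ∉ Set.range g) (b : V) : embedMatrix g M a b = 0 :=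
  Finset.sum_eq_zero fun i _ => Finset.sum_eq_zero fun _ _ =>
    if_neg fun h => ha ⟨i, h.1.symm⟩

theorem embedMatrix_one_apply {R : Type*} [CommSemiring R] [Fintype ι] [DecidableEq ι]
    [DecidableEq V] (f : ι → V) (a b : V) :
    embedMatrix f (1 : Matrix ι ι R) a b = ∑ i, if a = f i ∧ b = f i then 1 else 0 := by
  simp only [embedMatrix, of_apply]
  refine Finset.sum_congr rfl fun i _ => ?_
  rw [Finset.sum_eq_single i (fun j _ hji => by simp [one_apply_ne' hji]) (by simp)]
  simp

def pocketIncidence (R κ : Type*) [Zero R] [One R] [DecidableEq V] (f : ι → V) :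
    Matrix V (ι × κ) R :=
  of fun a p => if a = f p.1 then 1 else 0

theorem pocketIncidence_mul_one_kronecker_mul_transpose {R : Type*} [CommSemiring R] [Fintype ι]
    [DecidableEq ι] [Fintype κ] [DecidableEq V] (f : ι → V) (T : Matrix κ κ R) :
    pocketIncidence R κ f * ((1 : Matrix ι ι R) ⊗ₖ T) * (pocketIncidence R κ f)ᵀ
      = (∑ w, ∑ w', T w w') • embedMatrix f 1 := by
  ext a b
  rw [Matrix.smul_apply, embedMatrix_one_apply, Finset.smul_sum]
  simp only [mul_apply, Fintype.sum_prod_type, pocketIncidence, of_apply, transpose_apply,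
    kroneckerMap_apply, one_apply]
  refine Finset.sum_congr rfl fun i _ => ?_
  by_cases ha : a = f i <;> by_cases hb : b = f i <;> simp [ha, hb, Finset.sum_ite_eq']
  exact Finset.sum_comm

theorem det_fromBlocks_pocketIncidence [Fintype ι] [DecidableEq ι] [Fintype κ] [DecidableEq κ]
    [Fintype V] [DecidableEq V] (A : Matrix V V K) (f : ι → V) {S : Matrix κ κ K}
    (hS : IsUnit S.det) :
    (fromBlocks A (-pocketIncidence K κ f) (-(pocketIncidence K κ f)ᵀ)
        ((1 : Matrix ι ι K) ⊗ₖ S)).det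
      = S.det ^ Fintype.card ι * (A - (∑ w, ∑ w', S⁻¹ w w') • embedMatrix f 1).det := by
  have hdet : ((1 : Matrix ι ι K) ⊗ₖ S).det = S.det ^ Fintype.card ι := by
    simp [det_kronecker]
  have := invertibleOfIsUnitDet _ (hdet ▸ hS.pow _)
  rw [det_fromBlocks₂₂, hdet, invOf_eq_nonsing_inv, inv_kronecker, inv_one,
    Matrix.neg_mul, Matrix.neg_mul, Matrix.mul_neg, neg_neg,
    pocketIncidence_mul_one_kronecker_mul_transpose]

/-- The characteristic matrix of `A + (c / (X - r)) • E`, multiplied by `X - r`. -/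
noncomputable def clearedCharmatrix {R : Type*} [CommRing R] (A E : Matrix n n R) (r c : R) :
    Matrix n n R[X] :=
  (X - C r) • charmatrix A - C c • E.map C

theorem eval_det_clearedCharmatrix {R : Type*} [CommRing R] (A E : Matrix n n R) (r c x : R) :
    (clearedCharmatrix A E r c).det.eval x = ((x - r) • (x • 1 - A) - c • E).det := by
  rw [← coe_evalRingHom, RingHom.map_det]
  congr 1
  ext a b
  by_cases h : a = b
  · subst h
    simp [clearedCharmatrix, charmatrix_apply_eq]
  · simp [clearedCharmatrix, charmatrix_apply_ne _ _ _ h, one_apply_ne h]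

theorem pow_dvd_det_clearedCharmatrix_embedMatrix {R : Type*} [CommRing R] [Fintype ι]
    [DecidableEq ι] (A : Matrix n n R) (f : ι ↪ n) (r c : R) :
    (X - C r) ^ (Fintype.card n - Fintype.card ι)
      ∣ (clearedCharmatrix A (embedMatrix f 1) r c).det := by
  have hcard : (Finset.univ.map f)ᶜ.card = Fintype.card n - Fintype.card ι := by
    simp [Finset.card_compl]
  rw [← hcard]
  refine pow_card_compl_dvd_det _ _ _ fun a ha b => ?_
  have hE : embedMatrix f (1 : Matrix ι ι R) a b = 0 :=
    embedMatrix_apply_of_notMem_range _ (by simpa using ha) b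
  simp [clearedCharmatrix, hE]

end MatrixLemmas

theorem le_rootMultiplicity_of_mul_eq {K : Type*} [Field K] {r α β t : K} {k : ℕ}
    {g h p q : K[X]} (hg : g ≠ 0) (hp : p ≠ 0) (hgq : (X - C r) ^ k * g = h ^ k * q)
    (hph : (X - C r) * p = (X - C α) * (X - C β) * h) (ht : p.IsRoot t) (hα : t ≠ α)
    (hβ : t ≠ β) : k ≤ g.rootMultiplicity t := by
  have hl₁ : (X - C r) ^ k * g ≠ 0 := mul_ne_zero (pow_ne_zero _ (X_sub_C_ne_zero r)) hg
  have hl₂ : (X - C r) * p ≠ 0 := mul_ne_zero (X_sub_C_ne_zero r) hp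
  have e₁ := congrArg (fun P => P.roots.count t) hgq
  have e₂ := congrArg (fun P => P.roots.count t) hph
  rw [roots_mul hl₁, roots_mul (hgq ▸ hl₁), roots_pow, roots_pow, roots_X_sub_C] at e₁
  rw [roots_mul hl₂, roots_mul (hph ▸ hl₂), roots_mul (left_ne_zero_of_mul (hph ▸ hl₂)),
    roots_X_sub_C, roots_X_sub_C, roots_X_sub_C] at e₂
  simp only [Multiset.count_add, Multiset.count_nsmul, Multiset.count_singleton, if_neg hα,
    if_neg hβ] at e₁ e₂
  have hpos : 0 < p.roots.count t := Multiset.count_pos.mpr ((mem_roots hp).mpr ht)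
  rw [← count_roots]
  nlinarith

section AdjMat

variable {K : Type*} [Field K] {V : Type*} [Fintype V]

theorem sum_smul_one_sub_adjMat_of_isReg [DecidableEq V] {G : SimpleGraph V} {r : ℕ}
    (hG : IsReg G r) (x : K) (i : V) :
    ∑ j, (x • (1 : Matrix V V K) - adjMat K G) i j = x - r := by
  have hdeg : ∑ j, adjMat K G i j = r := by
    simp only [adjMat, of_apply, Finset.sum_boole, ← hG i, gdeg]
  simp [Finset.sum_sub_distrib, hdeg, one_apply]

theorem isRoot_charpoly_adjMat_of_isReg [DecidableEq V] [Nonempty V] {G : SimpleGraph V} {r : ℕ}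
    (hG : IsReg G r) : (adjMat K G).charpoly.IsRoot r := by
  rw [IsRoot, ← det_smul_one_sub_eq_eval_charpoly, ← exists_mulVec_eq_zero_iff]
  refine ⟨fun _ => 1, Function.ne_iff.mpr ⟨Classical.arbitrary V, one_ne_zero⟩, ?_⟩
  ext i
  simpa [mulVec, dotProduct] using sum_smul_one_sub_adjMat_of_isReg hG (r : K) i

theorem aSpec_eq_roots_charpoly [DecidableEq V] (G : SimpleGraph V) :
    aSpec G = (adjMat ℝ G).charpoly.roots := by
  unfold aSpec
  congr!

theorem isHermitian_adjMat (G : SimpleGraph V) : (adjMat ℝ G).IsHermitian := by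
  ext i j
  simp [adjMat, SimpleGraph.adj_comm]

theorem det_smul_one_sub_adjMat_of_isReg [DecidableEq V] [Nonempty V] {G : SimpleGraph V}
    {r : ℕ} (hG : IsReg G r) (x : ℝ) :
    (x • (1 : Matrix V V ℝ) - adjMat ℝ G).det
      = (x - r) * (((aSpec G).erase (r : ℝ)).map fun μ => x - μ).prod := by
  have hr : (r : ℝ) ∈ aSpec G := by
    rw [aSpec_eq_roots_charpoly, mem_roots (charpoly_monic _).ne_zero]
    exact isRoot_charpoly_adjMat_of_isReg hG
  rw [det_smul_one_sub_eq_eval_charpoly, (isHermitian_adjMat G).splits_charpoly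
    |>.eval_eq_prod_roots_of_monic (charpoly_monic _), ← aSpec_eq_roots_charpoly,
    ← Multiset.prod_map_erase hr]

theorem adjMat_comap_equiv {U : Type*} [Fintype U] (G : SimpleGraph V) (e : U ≃ V) :
    adjMat K (G.comap e) = reindex e.symm e.symm (adjMat K G) := by
  ext a b
  simp [adjMat]

end AdjMat

section PocketGraph

variable {K : Type*} [Field K] {V W : Type*} [Fintype V] [DecidableEq V] [Fintype W]
  [DecidableEq W] {F : SimpleGraph V} {H : SimpleGraph W} {v : W} {k : ℕ} (f : Fin k ↪ V)

theorem cast_card_subtype_ne (v : W) :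
    (Fintype.card {w // w ≠ v} : K) = Fintype.card W - 1 := by
  rw [← Fintype.card_congr (Equiv.optionSubtypeNe v), Fintype.card_option]
  push_cast
  ring

theorem smul_one_sub_adjMat_pocketGraph (hdeg : ∀ w, w ≠ v → H.Adj v w) (x : K) :
    x • (1 : Matrix (V ⊕ (Fin k × {w // w ≠ v})) (V ⊕ (Fin k × {w // w ≠ v})) K)
        - adjMat K (pocketGraph F H v f)
      = fromBlocks (x • 1 - adjMat K F) (-pocketIncidence K _ f) (-(pocketIncidence K _ f)ᵀ)
          ((1 : Matrix (Fin k) (Fin k) K) ⊗ₖ (x • 1 - adjMat K (delVert H v))) := by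
  ext (a | ⟨i, w⟩) (b | ⟨j, w'⟩)
  · simp [adjMat, pocketGraph, one_apply]
    rfl
  · simp [adjMat, pocketGraph, pocketIncidence, hdeg _ w'.2]
  · simp [adjMat, pocketGraph, pocketIncidence, hdeg _ w.2]
  · by_cases hij : i = j
    · subst hij
      simp [adjMat, pocketGraph, delVert, one_apply]
    · simp [adjMat, pocketGraph, one_apply, hij]

theorem det_smul_one_sub_adjMat_pocketGraph_of_isUnit (hdeg : ∀ w, w ≠ v → H.Adj v w) {r : ℕ}
    (hreg : IsReg (delVert H v) r) {x : K}
    (hx : IsUnit (x • (1 : Matrix {w // w ≠ v} {w // w ≠ v} K) - adjMat K (delVert H v)).det) :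
    (x • (1 : Matrix (V ⊕ (Fin k × {w // w ≠ v})) (V ⊕ (Fin k × {w // w ≠ v})) K)
        - adjMat K (pocketGraph F H v f)).det
      = (x • (1 : Matrix {w // w ≠ v} {w // w ≠ v} K) - adjMat K (delVert H v)).det ^ k
        * (x • (1 : Matrix V V K) - (adjMat K F
            + ((Fintype.card W - 1) / (x - r)) • embedMatrix f 1)).det := by
  rw [smul_one_sub_adjMat_pocketGraph f hdeg, det_fromBlocks_pocketIncidence _ _ hx,
    sum_sum_inv_of_sum_eq hx (sum_smul_one_sub_adjMat_of_isReg hreg x), cast_card_subtype_ne,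
    Fintype.card_fin, sub_add_eq_sub_sub]

theorem X_sub_C_pow_mul_charpoly_pocketGraph [Infinite K] (hdeg : ∀ w, w ≠ v → H.Adj v w)
    {r : ℕ} (hreg : IsReg (delVert H v) r) :
    (X - C (r : K)) ^ Fintype.card V * (adjMat K (pocketGraph F H v f)).charpoly
      = (adjMat K (delVert H v)).charpoly ^ k
        * (clearedCharmatrix (adjMat K F) (embedMatrix f 1) r (Fintype.card W - 1)).det := by
  set p := (X - C (r : K)) * (adjMat K (delVert H v)).charpoly
  have hp : p ≠ 0 := mul_ne_zero (X_sub_C_ne_zero _) (charpoly_monic _).ne_zero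
  refine eq_of_infinite_eval_eq _ _
    ((finite_setOfPred_isRoot hp).infinite_compl.mono fun y hy => ?_)
  simp only [Set.mem_compl_iff, Set.mem_ofPred_eq, p, IsRoot, eval_mul, eval_sub, eval_X,
    eval_C, mul_eq_zero, not_or, sub_eq_zero] at hy ⊢
  obtain ⟨hyr, hy⟩ := hy
  rw [← det_smul_one_sub_eq_eval_charpoly] at hy
  rw [eval_pow, eval_pow, eval_sub, eval_X, eval_C, eval_det_clearedCharmatrix,
    ← det_smul_one_sub_eq_eval_charpoly, ← det_smul_one_sub_eq_eval_charpoly,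
    det_smul_one_sub_adjMat_pocketGraph_of_isUnit f hdeg hreg (isUnit_iff_ne_zero.mpr hy),
    det_sub_smul_eq_pow_mul_det _ _ (sub_ne_zero.mpr hyr), sub_add_eq_sub_sub]
  ring

theorem det_smul_one_sub_adjMat_pocketGraph [Infinite K] (hdeg : ∀ w, w ≠ v → H.Adj v w)
    {r : ℕ} (hreg : IsReg (delVert H v) r) {x : K} (hx : x ≠ r) :
    (x • (1 : Matrix (V ⊕ (Fin k × {w // w ≠ v})) (V ⊕ (Fin k × {w // w ≠ v})) K)
        - adjMat K (pocketGraph F H v f)).det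
      = (x • (1 : Matrix {w // w ≠ v} {w // w ≠ v} K) - adjMat K (delVert H v)).det ^ k
        * (x • (1 : Matrix V V K) - (adjMat K F
            + ((Fintype.card W - 1) / (x - r)) • embedMatrix f 1)).det := by
  have hxr : x - r ≠ 0 := sub_ne_zero.mpr hx
  have h := congrArg (eval x) (X_sub_C_pow_mul_charpoly_pocketGraph (F := F) f hdeg hreg)
  rw [eval_mul, eval_mul, eval_pow, eval_pow, eval_sub, eval_X, eval_C,
    eval_det_clearedCharmatrix, det_sub_smul_eq_pow_mul_det _ _ hxr,
    ← det_smul_one_sub_eq_eval_charpoly, ← det_smul_one_sub_eq_eval_charpoly] at h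
  rw [sub_add_eq_sub_sub]
  exact mul_left_cancel₀ (pow_ne_zero _ hxr) (h.trans (mul_left_comm _ _ _))

theorem exists_X_sub_C_pow_mul_charpoly_pocketGraph_eq [Infinite K]
    (hdeg : ∀ w, w ≠ v → H.Adj v w) {r : ℕ} (hreg : IsReg (delVert H v) r) :
    ∃ q : K[X], (X - C (r : K)) ^ k * (adjMat K (pocketGraph F H v f)).charpoly
      = (adjMat K (delVert H v)).charpoly ^ k * q := by
  obtain ⟨q, hq⟩ := pow_dvd_det_clearedCharmatrix_embedMatrix (adjMat K F) f (r : K)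
    (Fintype.card W - 1)
  have hk : k ≤ Fintype.card V := by simpa using Fintype.card_le_of_embedding f
  refine ⟨q, mul_left_cancel₀ (pow_ne_zero (Fintype.card V - k) (X_sub_C_ne_zero (r : K))) ?_⟩
  rw [← mul_assoc, ← pow_add, Nat.sub_add_cancel hk, X_sub_C_pow_mul_charpoly_pocketGraph f hdeg
    hreg, hq, Fintype.card_fin]
  ring

end PocketGraph

section SinglePocket

variable {K : Type*} [Field K] {W : Type*} [DecidableEq W]

def singlePocketEquiv (v : W) : Unit ⊕ (Fin 1 × {w // w ≠ v}) ≃ W :=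
  (Equiv.sumCongr (Equiv.refl Unit) (Equiv.uniqueProd _ (Fin 1))).trans <|
    (Equiv.sumComm _ _).trans <| (Equiv.optionEquivSumPUnit _).symm.trans <|
      Equiv.optionSubtypeNe v

theorem pocketGraph_bot_eq_comap (H : SimpleGraph W) (v : W) :
    pocketGraph (⊥ : SimpleGraph Unit) H v (Equiv.equivPUnit (Fin 1)).toEmbedding
      = H.comap (singlePocketEquiv v) := by
  ext (a | ⟨i, w⟩) (b | ⟨j, w'⟩)
  all_goals simp [pocketGraph, singlePocketEquiv, SimpleGraph.adj_comm, Fin.fin_one_eq_zero]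

theorem X_sub_C_mul_charpoly_eq_of_isReg_delVert [Fintype W] [Infinite K] {H : SimpleGraph W}
    {v : W} (hdeg : ∀ w, w ≠ v → H.Adj v w) {r : ℕ} (hreg : IsReg (delVert H v) r) :
    (X - C (r : K)) * (adjMat K H).charpoly
      = (X ^ 2 - C (r : K) * X - C ((Fintype.card W : K) - 1))
        * (adjMat K (delVert H v)).charpoly := by
  have h := X_sub_C_pow_mul_charpoly_pocketGraph (K := K) (F := ⊥)
    (Equiv.equivPUnit (Fin 1)).toEmbedding hdeg hreg
  rw [pocketGraph_bot_eq_comap, adjMat_comap_equiv, charpoly_reindex, Fintype.card_unit,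
    pow_one, pow_one, det_unique] at h
  rw [h, mul_comm]
  congr 1
  simp [clearedCharmatrix, embedMatrix, adjMat]
  ring

end SinglePocket

theorem adj_spec_pocketGraph_general
    {V W : Type*} [Fintype V] [DecidableEq V] [Fintype W] [DecidableEq W]
    (m k r₁ : ℕ) (hm : Fintype.card W = m) (hm2 : 2 ≤ m)
    (F : SimpleGraph V) (H : SimpleGraph W) (v : W)
    (hdeg : ∀ w : W, w ≠ v → H.Adj v w)
    (hreg : IsReg (delVert H v) r₁)
    (f : Fin k ↪ V)
    (α β : ℝ)
    (hαβ : ∀ x : ℝ, x ^ 2 - (r₁ : ℝ) * x - ((m : ℝ) - 1) = (x - α) * (x - β)) :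
    (∀ lam : ℝ, lam ∈ aSpec H → lam ≠ α → lam ≠ β →
        k ≤ Multiset.count lam (aSpec (pocketGraph F H v f)))
    ∧ (∀ x : ℝ, x ≠ (r₁ : ℝ) →
        (x • (1 : Matrix (V ⊕ (Fin k × {w : W // w ≠ v})) (V ⊕ (Fin k × {w : W // w ≠ v})) ℝ)
            - adjMat ℝ (pocketGraph F H v f)).det
          = (x - (r₁ : ℝ)) ^ k
            * ((((aSpec (delVert H v)).erase (r₁ : ℝ)).map fun μ => x - μ).prod) ^ k
            * (x • (1 : Matrix V V ℝ)
                - (adjMat ℝ F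
                    + (((m : ℝ) - 1) / (x - (r₁ : ℝ)))
                        • embedMatrix (f : Fin k → V) (1 : Matrix (Fin k) (Fin k) ℝ))).det) := by
  subst hm
  have : Nonempty {w // w ≠ v} := by
    obtain ⟨w, hw⟩ := Fintype.exists_ne_of_one_lt_card hm2 v
    exact ⟨⟨w, hw⟩⟩
  refine ⟨fun lam hlam hα hβ => ?_, fun x hx => ?_⟩
  · obtain ⟨q, hq⟩ := exists_X_sub_C_pow_mul_charpoly_pocketGraph_eq (K := ℝ) (F := F) f hdeg hreg
    have hquad : X ^ 2 - C (r₁ : ℝ) * X - C ((Fintype.card W : ℝ) - 1) = (X - C α) * (X - C β) :=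
      Polynomial.funext fun x => by simpa using hαβ x
    rw [aSpec_eq_roots_charpoly, mem_roots (charpoly_monic _).ne_zero] at hlam
    rw [aSpec_eq_roots_charpoly, count_roots]
    exact le_rootMultiplicity_of_mul_eq (charpoly_monic _).ne_zero (charpoly_monic _).ne_zero hq
      (hquad ▸ X_sub_C_mul_charpoly_eq_of_isReg_delVert hdeg hreg) hlam hα hβ
  · rw [det_smul_one_sub_adjMat_pocketGraph f hdeg hreg hx, det_smul_one_sub_adjMat_of_isReg hreg,
      mul_pow]

/-- Theorem 3.2. -/
theorem adj_spec_pocketGraph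
    {V W : Type*} [Fintype V] [DecidableEq V] [Fintype W] [DecidableEq W]
    (n m k r₁ : ℕ) (hn : Fintype.card V = n) (hm : Fintype.card W = m) (hm2 : 2 ≤ m)
    (hr₁ : 1 ≤ r₁)
    (F : SimpleGraph V) (H : SimpleGraph W) (v : W)
    (hdeg : ∀ w : W, w ≠ v → H.Adj v w)
    (hreg : IsReg (delVert H v) r₁)
    (f : Fin k ↪ V)
    (α β : ℝ)
    (hαβ : ∀ x : ℝ, x ^ 2 - (r₁ : ℝ) * x - ((m : ℝ) - 1) = (x - α) * (x - β)) :
    (∀ lam : ℝ, lam ∈ aSpec H → lam ≠ α → lam ≠ β →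
        k ≤ Multiset.count lam (aSpec (pocketGraph F H v f)))
    ∧ (∀ x : ℝ, x ≠ (r₁ : ℝ) →
        (x • (1 : Matrix (V ⊕ (Fin k × {w : W // w ≠ v})) (V ⊕ (Fin k × {w : W // w ≠ v})) ℝ)
            - adjMat ℝ (pocketGraph F H v f)).det
          = (x - (r₁ : ℝ)) ^ k
            * ((((aSpec (delVert H v)).erase (r₁ : ℝ)).map fun μ => x - μ).prod) ^ k
            * (x • (1 : Matrix V V ℝ)
                - (adjMat ℝ F
                    + (((m : ℝ) - 1) / (x - (r₁ : ℝ)))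
                        • embedMatrix (f : Fin k → V) (1 : Matrix (Fin k) (Fin k) ℝ))).det) :=
  adj_spec_pocketGraph_general m k r₁ hm hm2 F H v hdeg hreg f α β hαβ
end

section
/- Let G = G[F,E_k,H_{uv}] be the graph with k edge-pockets, where |E_k| = k and the subgraph 𝓔_k of F induced by E_k is r-regular on p = 2k/r vertices. Then for every complex number x such that x − 2 is not an eigenvalue of Q(H_2), the Q-characteristic polynomial of G satisfies f_{Q(G)}(x) = (f_{Q(H_2)}(x−2))^k · det(x I_n − M), where M = Q(F) + r(m−2)·diag(I_p, 0) + Γ_{Q(H_2)}(x−2)·diag(Q(𝓔_k), 0), and the block structure is taken with respect to an ordering of V(F) listing the p vertices of 𝓔_k first. -/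
open Matrix BigOperators
open scoped Classical

/-!
List the vertices of `G` as `V(F)` followed by the `k` copies of `H₂ = H − {u,v}`. Every vertex
of a pocket is adjacent to both ends of its edge `eᵢ`, so `xI − Q(G)` is a block matrix whose
lower-right block is `I_k ⊗ ((x − 2)I − Q(H₂))` and whose off-diagonal blocks are `−R ⊗ 1`, with
`R` the vertex–edge incidence matrix of `E_k`. The Schur complement of the lower-right block
produces the factor `f_{Q(H₂)}(x − 2)^k` and the correction `Γ_{Q(H₂)}(x − 2) · R Rᵀ`, and
`R Rᵀ = diag(Q(𝓔_k), 0)`. The `r` edges of `E_k` at a vertex of `𝓔_k` each bring `m − 2` new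
neighbours, which is the term `r(m − 2) · diag(I_p, 0)`.
-/

open scoped Kronecker

theorem submatrix_fst_mul_one_kronecker_mul_transpose {R V ι S : Type*} [CommSemiring R]
    [Fintype ι] [DecidableEq ι] [Fintype S] (K : Matrix V ι R) (M : Matrix S S R) :
    K.submatrix id (Prod.fst : ι × S → ι) * ((1 : Matrix ι ι R) ⊗ₖ M)
        * (K.submatrix id (Prod.fst : ι × S → ι))ᵀ
      = (∑ w, ∑ w', M w w') • (K * Kᵀ) := by
  ext s t
  simp only [Matrix.mul_apply, Fintype.sum_prod_type, Matrix.submatrix_apply, id,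
    Matrix.kroneckerMap_apply, Matrix.one_apply, Matrix.transpose_apply, Matrix.smul_apply,
    smul_eq_mul, ite_mul, mul_ite, one_mul, zero_mul, mul_zero, Finset.sum_ite_irrel,
    Finset.sum_const_zero, Finset.sum_ite_eq', Finset.mem_univ, if_true, Finset.sum_mul,
    Finset.mul_sum]
  refine Finset.sum_congr rfl fun j _ => ?_
  rw [Finset.sum_comm]
  simp only [mul_comm, mul_left_comm]

theorem det_fromBlocks_submatrix_fst_one_kronecker {R V ι S : Type*} [Field R] [Fintype V]
    [DecidableEq V] [Fintype ι] [DecidableEq ι] [Fintype S] [DecidableEq S]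
    (A : Matrix V V R) (K : Matrix V ι R) (N : Matrix S S R) (hN : IsUnit N.det) :
    (Matrix.fromBlocks A (K.submatrix id (Prod.fst : ι × S → ι))
        (K.submatrix id (Prod.fst : ι × S → ι))ᵀ ((1 : Matrix ι ι R) ⊗ₖ N)).det
      = N.det ^ Fintype.card ι * (A - (∑ w, ∑ w', N⁻¹ w w') • (K * Kᵀ)).det := by
  have hdet : ((1 : Matrix ι ι R) ⊗ₖ N).det = N.det ^ Fintype.card ι := by
    simp [Matrix.det_kronecker]
  have : Invertible ((1 : Matrix ι ι R) ⊗ₖ N) :=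
    Matrix.invertibleOfIsUnitDet _ (hdet ▸ hN.pow _)
  rw [Matrix.det_fromBlocks₂₂, Matrix.invOf_eq_nonsing_inv, Matrix.inv_kronecker, inv_one,
    submatrix_fst_mul_one_kronecker_mul_transpose, hdet]

section EdgeIncidence

variable {V ι : Type*} [DecidableEq V] [Fintype ι] (e : ι → Sym2 V)

def edgeIncidence (R : Type*) [Zero R] [One R] : Matrix V ι R :=
  Matrix.of fun s i => if s ∈ e i then 1 else 0

variable {e}

theorem card_filter_mem_eq_card_filter_pair_mem_range [Fintype V] (he : Function.Injective e)
    (s : V) :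
    (Finset.univ.filter fun i => s ∈ e i).card
      = (Finset.univ.filter fun t => s(s, t) ∈ Set.range e).card := by
  refine Finset.card_bij (fun i hi => Sym2.Mem.other (Finset.mem_filter.mp hi).2) ?_ ?_ ?_
  · intro i hi
    simp only [Finset.mem_filter, Finset.mem_univ, true_and, Sym2.other_spec]
    exact ⟨i, rfl⟩
  · intro i hi j hj hij
    apply he
    rw [← Sym2.other_spec (Finset.mem_filter.mp hi).2,
      ← Sym2.other_spec (Finset.mem_filter.mp hj).2, hij]
  · intro t ht
    obtain ⟨i, hi⟩ := (Finset.mem_filter.mp ht).2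
    have hs : s ∈ e i := hi ▸ Sym2.mem_mk_left s t
    refine ⟨i, Finset.mem_filter.mpr ⟨Finset.mem_univ i, hs⟩, ?_⟩
    rw [← Sym2.congr_right, Sym2.other_spec, hi]

theorem card_filter_mem_and_mem (he : Function.Injective e) {s t : V} (hst : s ≠ t) :
    (Finset.univ.filter fun i => s ∈ e i ∧ t ∈ e i).card
      = if s(s, t) ∈ Set.range e then 1 else 0 := by
  simp only [Sym2.mem_and_mem_iff hst]
  split_ifs with h
  · obtain ⟨i, hi⟩ := h
    rw [Finset.card_eq_one]
    exact ⟨i, by ext j; simp [← hi, he.eq_iff]⟩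
  · rw [Finset.card_eq_zero, Finset.filter_eq_empty_iff]
    exact fun i _ hi => h ⟨i, hi⟩

theorem edgeIncidence_mul_transpose_apply (R : Type*) [CommSemiring R] (s t : V) :
    (edgeIncidence e R * (edgeIncidence e R)ᵀ) s t
      = (Finset.univ.filter fun i => s ∈ e i ∧ t ∈ e i).card := by
  simp only [edgeIncidence, Matrix.mul_apply, Matrix.transpose_apply, Matrix.of_apply, boole_mul,
    Finset.card_filter, Nat.cast_sum, Nat.cast_ite, Nat.cast_one, Nat.cast_zero, ite_and]

end EdgeIncidence

section EmbedMatrix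

variable {P V R : Type*} [Fintype P] {g : P → V}

theorem embedMatrix_apply_apply [AddCommMonoid R] (hg : Function.Injective g) (M : Matrix P P R)
    (p q : P) : embedMatrix g M (g p) (g q) = M p q := by
  simp [embedMatrix, hg.eq_iff, ite_and]

theorem embedMatrix_apply_of_notMem_range_left [AddCommMonoid R] (M : Matrix P P R) {s : V}
    (hs : s ∉ Set.range g) (t : V) : embedMatrix g M s t = 0 :=
  Finset.sum_eq_zero fun p _ => Finset.sum_eq_zero fun _ _ => if_neg fun h => hs ⟨p, h.1.symm⟩

theorem embedMatrix_apply_of_notMem_range_right [AddCommMonoid R] (M : Matrix P P R) (s : V)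
    {t : V} (ht : t ∉ Set.range g) : embedMatrix g M s t = 0 :=
  Finset.sum_eq_zero fun _ _ => Finset.sum_eq_zero fun q _ => if_neg fun h => ht ⟨q, h.2.symm⟩

theorem embedMatrix_one [DecidableEq P] [DecidableEq V] [AddCommMonoidWithOne R]
    (hg : Function.Injective g) :
    embedMatrix g (1 : Matrix P P R)
      = Matrix.diagonal fun s => if s ∈ Set.range g then 1 else 0 := by
  ext s t
  by_cases hs : s ∈ Set.range g
  · obtain ⟨p, rfl⟩ := hs
    by_cases ht : t ∈ Set.range g
    · obtain ⟨q, rfl⟩ := ht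
      simp [embedMatrix_apply_apply hg, Matrix.one_apply, Matrix.diagonal_apply, hg.eq_iff]
    · rw [embedMatrix_apply_of_notMem_range_right _ _ ht, Matrix.diagonal_apply_ne]
      rintro rfl
      exact ht ⟨p, rfl⟩
  · rw [embedMatrix_apply_of_notMem_range_left _ hs, Matrix.diagonal_apply, if_neg hs, ite_self]

end EmbedMatrix

section PulledBackEdges

variable {P V ι : Type*} [DecidableEq V] [Fintype ι]
  {e : ι → Sym2 V} {g : P → V} {E : SimpleGraph P}

theorem card_filter_mem_eq_zero (hcover : ∀ i, ∀ s ∈ e i, s ∈ Set.range g) {s : V}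
    (hs : s ∉ Set.range g) : (Finset.univ.filter fun i => s ∈ e i).card = 0 :=
  Finset.card_eq_zero.mpr <| Finset.filter_eq_empty_iff.mpr fun i _ h => hs (hcover i s h)

theorem card_filter_mem_eq_gdeg [Fintype P] [Fintype V] (he : Function.Injective e)
    (hg : Function.Injective g) (hcover : ∀ i, ∀ s ∈ e i, s ∈ Set.range g)
    (hE : ∀ q q', E.Adj q q' ↔ s(g q, g q') ∈ Set.range e) (q : P) :
    (Finset.univ.filter fun i => g q ∈ e i).card = gdeg E q := by
  rw [card_filter_mem_eq_card_filter_pair_mem_range he, gdeg]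
  symm
  refine Finset.card_bij (fun q' _ => g q') ?_ (fun _ _ _ _ h => hg h) ?_
  · intro q' hq'
    exact Finset.mem_filter.mpr ⟨Finset.mem_univ _, (hE q q').mp (Finset.mem_filter.mp hq').2⟩
  · intro t ht
    obtain ⟨i, hi⟩ := (Finset.mem_filter.mp ht).2
    obtain ⟨q', rfl⟩ := hcover i t (hi ▸ Sym2.mem_mk_right _ t)
    exact ⟨q', Finset.mem_filter.mpr ⟨Finset.mem_univ _, (hE q q').mpr ⟨i, hi⟩⟩, rfl⟩

theorem edgeIncidence_mul_transpose [Fintype P] [Fintype V] (R : Type*) [CommRing R]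
    (he : Function.Injective e) (hg : Function.Injective g)
    (hcover : ∀ i, ∀ s ∈ e i, s ∈ Set.range g)
    (hE : ∀ q q', E.Adj q q' ↔ s(g q, g q') ∈ Set.range e) :
    edgeIncidence e R * (edgeIncidence e R)ᵀ = embedMatrix g (qMat R E) := by
  ext s t
  rw [edgeIncidence_mul_transpose_apply]
  by_cases hs : s ∈ Set.range g
  · by_cases ht : t ∈ Set.range g
    · obtain ⟨p, rfl⟩ := hs
      obtain ⟨q, rfl⟩ := ht
      rw [embedMatrix_apply_apply hg]
      by_cases hpq : p = q
      · subst hpq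
        simp [card_filter_mem_eq_gdeg he hg hcover hE, qMat, adjMat]
      · rw [card_filter_mem_and_mem he (hg.ne hpq)]
        simp [qMat, adjMat, hpq, hE]
    · rw [embedMatrix_apply_of_notMem_range_right _ _ ht, Finset.card_eq_zero.mpr, Nat.cast_zero]
      exact Finset.filter_eq_empty_iff.mpr fun i _ h => ht (hcover i t h.2)
  · rw [embedMatrix_apply_of_notMem_range_left _ hs, Finset.card_eq_zero.mpr, Nat.cast_zero]
    exact Finset.filter_eq_empty_iff.mpr fun i _ h => hs (hcover i s h.1)

theorem diagonal_card_filter_mem_mul [Fintype P] [DecidableEq P] [Fintype V] {R : Type*}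
    [CommRing R] {r : ℕ} (he : Function.Injective e) (hg : Function.Injective g)
    (hcover : ∀ i, ∀ s ∈ e i, s ∈ Set.range g)
    (hE : ∀ q q', E.Adj q q' ↔ s(g q, g q') ∈ Set.range e) (hreg : IsReg E r) (c : R) :
    Matrix.diagonal (fun s => ((Finset.univ.filter fun i => s ∈ e i).card : R) * c)
      = ((r : R) * c) • embedMatrix g (1 : Matrix P P R) := by
  rw [embedMatrix_one hg, ← Matrix.diagonal_smul]
  congr 1
  funext s
  by_cases hs : s ∈ Set.range g
  · obtain ⟨q, rfl⟩ := hs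
    simp [card_filter_mem_eq_gdeg he hg hcover hE, hreg q]
  · rw [card_filter_mem_eq_zero hcover hs, Pi.smul_apply, if_neg hs]
    simp

end PulledBackEdges

section EdgePocketGraph

variable {V W : Type*} (F : SimpleGraph V)
  {H : SimpleGraph W} {u v : W} {k : ℕ} (a b : Fin k → V)

theorem edgePocketGraph_adj_inl_inl {s t : V} :
    (edgePocketGraph F H u v a b).Adj (Sum.inl s) (Sum.inl t) ↔ F.Adj s t :=
  Iff.rfl

theorem edgePocketGraph_adj_inl_inr (hu : ∀ w, w ≠ u → H.Adj u w) (hv : ∀ w, w ≠ v → H.Adj v w)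
    (s : V) (i : Fin k) (w : {w : W // w ≠ u ∧ w ≠ v}) :
    (edgePocketGraph F H u v a b).Adj (Sum.inl s) (Sum.inr (i, w)) ↔ s ∈ s(a i, b i) := by
  rw [Sym2.mem_iff]
  exact or_congr (and_iff_left (hu w w.2.1)) (and_iff_left (hv w w.2.2))

theorem edgePocketGraph_adj_inr_inr {i j : Fin k} {w w' : {w : W // w ≠ u ∧ w ≠ v}} :
    (edgePocketGraph F H u v a b).Adj (Sum.inr (i, w)) (Sum.inr (j, w'))
      ↔ i = j ∧ (delVert2 H u v).Adj w w' :=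
  Iff.rfl

theorem gdeg_edgePocketGraph_inl [Fintype V] [DecidableEq V] [Fintype W] [DecidableEq W]
    (hu : ∀ w, w ≠ u → H.Adj u w) (hv : ∀ w, w ≠ v → H.Adj v w) (s : V) :
    gdeg (edgePocketGraph F H u v a b) (Sum.inl s)
      = gdeg F s + (Finset.univ.filter fun i => s ∈ s(a i, b i)).card
          * Fintype.card {w : W // w ≠ u ∧ w ≠ v} := by
  rw [gdeg, gdeg, Finset.card_filter, Finset.card_filter, Fintype.sum_sum_type,
    Fintype.sum_prod_type, Finset.card_filter, Finset.sum_mul]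
  congr 1
  refine Finset.sum_congr rfl fun i _ => ?_
  simp only [edgePocketGraph_adj_inl_inr F a b hu hv, Finset.sum_const, Finset.card_univ,
    smul_eq_mul, mul_comm]

theorem gdeg_edgePocketGraph_inr [Fintype V] [DecidableEq V] [Fintype W] [DecidableEq W]
    (hu : ∀ w, w ≠ u → H.Adj u w) (hv : ∀ w, w ≠ v → H.Adj v w) {i : Fin k} (hab : a i ≠ b i)
    (w : {w : W // w ≠ u ∧ w ≠ v}) :
    gdeg (edgePocketGraph F H u v a b) (Sum.inr (i, w)) = 2 + gdeg (delVert2 H u v) w := by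
  rw [gdeg, gdeg, Finset.card_filter, Finset.card_filter, Fintype.sum_sum_type,
    Fintype.sum_prod_type]
  congr 1
  · have hpair : (Finset.univ.filter fun t => t ∈ s(a i, b i)) = {a i, b i} := by
      ext t
      simp [Sym2.mem_iff]
    simp only [(edgePocketGraph F H u v a b).adj_comm (Sum.inr _),
      edgePocketGraph_adj_inl_inr F a b hu hv]
    rw [← Finset.card_filter, hpair, Finset.card_pair hab]
  · rw [Finset.sum_eq_single i]
    · simp only [edgePocketGraph_adj_inr_inr, true_and]
    · intro j _ hji
      exact Finset.sum_eq_zero fun w' _ => if_neg fun h => hji h.1.symm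
    · simp

theorem smul_one_sub_qMat_edgePocketGraph [Fintype V] [DecidableEq V] [Fintype W]
    [DecidableEq W] (hu : ∀ w, w ≠ u → H.Adj u w) (hv : ∀ w, w ≠ v → H.Adj v w)
    (hab : ∀ i, a i ≠ b i) (R : Type*) [CommRing R] (x : R) :
    x • (1 : Matrix _ _ R) - qMat R (edgePocketGraph F H u v a b)
      = Matrix.fromBlocks
          (x • 1 - qMat R F - Matrix.diagonal fun s =>
            ((Finset.univ.filter fun i => s ∈ s(a i, b i)).card : R)
              * Fintype.card {w : W // w ≠ u ∧ w ≠ v})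
          ((-edgeIncidence (fun i => s(a i, b i)) R).submatrix id Prod.fst)
          ((-edgeIncidence (fun i => s(a i, b i)) R).submatrix id Prod.fst)ᵀ
          ((1 : Matrix (Fin k) (Fin k) R) ⊗ₖ ((x - 2) • 1 - qMat R (delVert2 H u v))) := by
  have hadj := edgePocketGraph_adj_inl_inr F a b hu hv
  ext (s | ⟨i, w⟩) (t | ⟨j, w'⟩)
  · by_cases hst : s = t
    · subst hst
      simp [qMat, adjMat, gdeg_edgePocketGraph_inl F a b hu hv]
      ring
    · simp [qMat, adjMat, edgePocketGraph_adj_inl_inl, hst]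
  · simp [qMat, adjMat, edgeIncidence, hadj]
  · simp [qMat, adjMat, edgeIncidence, (edgePocketGraph F H u v a b).adj_comm (Sum.inr _), hadj]
  · rcases eq_or_ne i j with rfl | hij
    · rcases eq_or_ne w w' with rfl | hww
      · simp [qMat, adjMat, Matrix.kroneckerMap_apply,
          gdeg_edgePocketGraph_inr F a b hu hv (hab i)]
        ring
      · simp [qMat, adjMat, Matrix.kroneckerMap_apply, edgePocketGraph_adj_inr_inr, hww]
    · simp [qMat, adjMat, Matrix.kroneckerMap_apply, edgePocketGraph_adj_inr_inr, hij]

end EdgePocketGraph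

theorem card_subtype_ne_and_ne_add_two {W : Type*} [Fintype W] [DecidableEq W] {u v : W}
    (huv : u ≠ v) : Fintype.card {w : W // w ≠ u ∧ w ≠ v} + 2 = Fintype.card W := by
  have hpair : (Finset.univ.filter fun w => ¬(w ≠ u ∧ w ≠ v)) = {u, v} := by
    ext w
    simp [or_iff_not_and_not]
  rw [Fintype.card_subtype, ← Finset.card_pair huv, ← hpair,
    Finset.card_filter_add_card_filter_not, Finset.card_univ]

theorem signlessLap_charpoly_edgePocketGraph_general
    {V W : Type*} [Fintype V] [DecidableEq V] [Fintype W] [DecidableEq W]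
    (m k p r : ℕ)
    (hm : Fintype.card W = m)
    (F : SimpleGraph V) (H : SimpleGraph W) (u v : W) (huv : u ≠ v)
    (hdegu : ∀ w : W, w ≠ u → H.Adj u w) (hdegv : ∀ w : W, w ≠ v → H.Adj v w)
    (a b : Fin k → V) (hab : ∀ i, F.Adj (a i) (b i))
    (hinj : Function.Injective fun i => s(a i, b i))
    (g : Fin p ↪ V) (E : SimpleGraph (Fin p))
    (hE : ∀ s t : Fin p, E.Adj s t ↔ ∃ i, s(g s, g t) = s(a i, b i))
    (hcover : ∀ i, a i ∈ Set.range g ∧ b i ∈ Set.range g)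
    (hreg : IsReg E r)
    (x : ℂ)
    (hx : ((x - 2) • (1 : Matrix {w : W // w ≠ u ∧ w ≠ v} {w : W // w ≠ u ∧ w ≠ v} ℂ)
            - qMat ℂ (delVert2 H u v)).det ≠ 0) :
    (x • (1 : Matrix (V ⊕ (Fin k × {w : W // w ≠ u ∧ w ≠ v}))
            (V ⊕ (Fin k × {w : W // w ≠ u ∧ w ≠ v})) ℂ)
        - qMat ℂ (edgePocketGraph F H u v a b)).det
      = (((x - 2) • (1 : Matrix {w : W // w ≠ u ∧ w ≠ v} {w : W // w ≠ u ∧ w ≠ v} ℂ)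
            - qMat ℂ (delVert2 H u v)).det) ^ k
        * (x • (1 : Matrix V V ℂ)
            - (qMat ℂ F
                + ((r : ℂ) * ((m : ℂ) - 2))
                    • embedMatrix (g : Fin p → V) (1 : Matrix (Fin p) (Fin p) ℂ)
                + coronal (qMat ℂ (delVert2 H u v)) (x - 2)
                    • embedMatrix (g : Fin p → V) (qMat ℂ E))).det := by
  have hcover' : ∀ i, ∀ s ∈ s(a i, b i), s ∈ Set.range g := fun i s hs => by
    rcases Sym2.mem_iff.mp hs with rfl | rfl
    exacts [(hcover i).1, (hcover i).2]
  have hE' : ∀ q q', E.Adj q q' ↔ s(g q, g q') ∈ Set.range fun i => s(a i, b i) :=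
    fun q q' => (hE q q').trans (exists_congr fun i => eq_comm)
  have hcard : (Fintype.card {w : W // w ≠ u ∧ w ≠ v} : ℂ) = m - 2 := by
    rw [← hm, ← card_subtype_ne_and_ne_add_two huv]
    push_cast
    ring
  rw [smul_one_sub_qMat_edgePocketGraph F a b hdegu hdegv (fun i => (hab i).ne),
    det_fromBlocks_submatrix_fst_one_kronecker _ _ _ (isUnit_iff_ne_zero.mpr hx), Fintype.card_fin,
    Matrix.transpose_neg, Matrix.neg_mul, Matrix.mul_neg, neg_neg,
    edgeIncidence_mul_transpose ℂ hinj g.injective hcover' hE',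
    diagonal_card_filter_mem_mul hinj g.injective hcover' hE' hreg, hcard]
  simp only [coronal, sub_sub, add_assoc]

/-- Proposition 4.1. -/
theorem signlessLap_charpoly_edgePocketGraph
    {V W : Type*} [Fintype V] [DecidableEq V] [Fintype W] [DecidableEq W]
    (n m k p r : ℕ) (hn : Fintype.card V = n) (hn2 : 2 ≤ n)
    (hm : Fintype.card W = m) (hm3 : 3 ≤ m)
    (F : SimpleGraph V) (H : SimpleGraph W) (u v : W) (huv : u ≠ v)
    (hdegu : ∀ w : W, w ≠ u → H.Adj u w) (hdegv : ∀ w : W, w ≠ v → H.Adj v w)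
    (a b : Fin k → V) (hab : ∀ i, F.Adj (a i) (b i))
    (hinj : Function.Injective fun i => s(a i, b i))
    (g : Fin p ↪ V) (E : SimpleGraph (Fin p))
    (hE : ∀ s t : Fin p, E.Adj s t ↔ ∃ i, s(g s, g t) = s(a i, b i))
    (hcover : ∀ i, a i ∈ Set.range g ∧ b i ∈ Set.range g)
    (hreg : IsReg E r) (hpk : r * p = 2 * k)
    (x : ℂ)
    (hx : ((x - 2) • (1 : Matrix {w : W // w ≠ u ∧ w ≠ v} {w : W // w ≠ u ∧ w ≠ v} ℂ)
            - qMat ℂ (delVert2 H u v)).det ≠ 0) :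
    (x • (1 : Matrix (V ⊕ (Fin k × {w : W // w ≠ u ∧ w ≠ v}))
            (V ⊕ (Fin k × {w : W // w ≠ u ∧ w ≠ v})) ℂ)
        - qMat ℂ (edgePocketGraph F H u v a b)).det
      = (((x - 2) • (1 : Matrix {w : W // w ≠ u ∧ w ≠ v} {w : W // w ≠ u ∧ w ≠ v} ℂ)
            - qMat ℂ (delVert2 H u v)).det) ^ k
        * (x • (1 : Matrix V V ℂ)
            - (qMat ℂ F
                + ((r : ℂ) * ((m : ℂ) - 2))
                    • embedMatrix (g : Fin p → V) (1 : Matrix (Fin p) (Fin p) ℂ)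
                + coronal (qMat ℂ (delVert2 H u v)) (x - 2)
                    • embedMatrix (g : Fin p → V) (qMat ℂ E))).det :=
  signlessLap_charpoly_edgePocketGraph_general m k p r hm F H u v huv hdegu hdegv a b hab hinj g E
    hE hcover hreg x hx
end
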